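/- For every natural number t and every prime p ≥ 11, the p-th cyclotomic polynomial Φ_p(x) does not divide Q_t(x) in ℤ[x]. -/

import Mathlib

/-!
If `Φ_p ∣ Q_t`, then `X ^ p - 1 ∣ Q_t`, because `Q_t(1) = 0` while `Φ_p(1) = p ≠ 0`.
Differentiating at `1` gives `p ∣ Q_t'(1) = 4t + 3`. Reduction modulo `X ^ p - 1`, i.e. the
map `ℤ[X] → ℤ[ℤ/p]`, must then kill `Q_t`. But once `4t ≡ -3 (mod p)`, no other exponent
of `Q_t` is congruent to `2t + 4` when `p > 5`, so the image of `Q_t` has coefficient `2`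
there.
-/

open Polynomial

/-- The polynomial `Q_t(x)`. -/
noncomputable def Qpoly (t : ℕ) : Polynomial ℤ :=
  X ^ (4 * t + 7) - X ^ (4 * t + 5) - X ^ (4 * t + 4) + 2 * X ^ (2 * t + 4)
    + X ^ (2 * t + 3) + X ^ (2 * t + 2) + X ^ (2 * t) - 2 * X ^ (t + 3) - X ^ 2 - 1

namespace Polynomial

variable {R : Type*} [CommRing R]

theorem X_pow_sub_one_dvd_of_cyclotomic_dvd [IsDomain R] {p : ℕ} [Fact p.Prime]
    (hp : (p : R) ≠ 0) {f : R[X]} (hΦ : cyclotomic p R ∣ f) (h1 : f.IsRoot 1) :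
    X ^ p - 1 ∣ f := by
  obtain ⟨g, rfl⟩ := hΦ
  have hΦ1 : ¬ X - C 1 ∣ cyclotomic p R := by
    rwa [dvd_iff_isRoot, IsRoot, eval_one_cyclotomic_prime]
  obtain ⟨h, rfl⟩ := ((prime_X_sub_C 1).dvd_or_dvd (dvd_iff_isRoot.mpr h1)).resolve_left hΦ1
  rw [← cyclotomic_prime_mul_X_sub_one R p, C_1, ← mul_assoc]
  exact dvd_mul_right _ _

theorem dvd_derivative_eval_one_of_X_pow_sub_one_dvd {p : ℕ} {f : R[X]} (h : X ^ p - 1 ∣ f) :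
    (p : R) ∣ (derivative f).eval 1 := by
  obtain ⟨g, rfl⟩ := h
  exact ⟨g.eval 1, by simp [derivative_X_pow]⟩

variable (R) in
/-- Reduction modulo `X ^ p - 1`, with `R[X] ⧸ (X ^ p - 1)` realised as the group algebra
of `ZMod p`. -/
noncomputable def toCyclicGroupAlgebra (p : ℕ) : R[X] →ₐ[R] AddMonoidAlgebra R (ZMod p) :=
  aeval (AddMonoidAlgebra.single 1 1)

theorem toCyclicGroupAlgebra_X_pow (p n : ℕ) :
    toCyclicGroupAlgebra R p (X ^ n) = AddMonoidAlgebra.single (n : ZMod p) 1 := by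
  simp [toCyclicGroupAlgebra, AddMonoidAlgebra.single_pow]

theorem toCyclicGroupAlgebra_eq_zero_of_X_pow_sub_one_dvd {p : ℕ} {f : R[X]}
    (h : X ^ p - 1 ∣ f) : toCyclicGroupAlgebra R p f = 0 := by
  obtain ⟨g, rfl⟩ := h
  simp [toCyclicGroupAlgebra_X_pow, ← AddMonoidAlgebra.one_def]

end Polynomial

theorem ZMod.natCast_ne_zero_of_pos_of_lt {p c : ℕ} (h0 : 0 < c) (hc : c < p) :
    (c : ZMod p) ≠ 0 := by
  rw [Ne, ZMod.natCast_eq_zero_iff]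
  exact fun h ↦ absurd (Nat.le_of_dvd h0 h) (by omega)

theorem Qpoly_isRoot_one (t : ℕ) : (Qpoly t).IsRoot 1 := by
  simp [Qpoly]

theorem Qpoly_derivative_eval_one (t : ℕ) : (derivative (Qpoly t)).eval 1 = 4 * t + 3 := by
  simp [Qpoly, derivative_X_pow]
  ring

theorem coeff_toCyclicGroupAlgebra_Qpoly {p t : ℕ} (hp : 5 < p) (ht : (4 * t + 3 : ZMod p) = 0) :
    (toCyclicGroupAlgebra ℤ p (Qpoly t)).coeff ((2 * t + 4 : ℕ) : ZMod p) = 2 := by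
  have h2 : ((2 : ℕ) : ZMod p) ≠ 0 := ZMod.natCast_ne_zero_of_pos_of_lt two_pos (by omega)
  have h3 : ((3 : ℕ) : ZMod p) ≠ 0 := ZMod.natCast_ne_zero_of_pos_of_lt three_pos (by omega)
  have h4 : ((4 : ℕ) : ZMod p) ≠ 0 := ZMod.natCast_ne_zero_of_pos_of_lt four_pos (by omega)
  have h5 : ((5 : ℕ) : ZMod p) ≠ 0 := ZMod.natCast_ne_zero_of_pos_of_lt (by norm_num) hp
  push_cast at h2 h3 h4 h5
  simp only [Qpoly, map_sub, map_add, map_mul, map_ofNat, map_one, toCyclicGroupAlgebra_X_pow,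
    AddMonoidAlgebra.ofNat_def, AddMonoidAlgebra.one_def, AddMonoidAlgebra.single_mul_single,
    zero_add, AddMonoidAlgebra.coeff_sub, AddMonoidAlgebra.coeff_add,
    AddMonoidAlgebra.coeff_single, Finsupp.sub_apply, Finsupp.add_apply, Finsupp.single_apply,
    Nat.cast_add, Nat.cast_mul, Nat.cast_ofNat]
  -- With `4t = -3`, every coincidence of `2t + 4` with another exponent forces
  -- one of `2, 3, 4, 5` to vanish in `ZMod p`.
  grind

/-- For every natural number `t` and every prime `p ≥ 11`, the `p`-th cyclotomic
polynomial does not divide `Q_t(x)` in `ℤ[x]`. -/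
theorem cyclotomic_prime_not_dvd_Q (t p : ℕ) (hp : p.Prime) (hp11 : 11 ≤ p) :
    ¬ Polynomial.cyclotomic p ℤ ∣ Qpoly t := by
  have := Fact.mk hp
  intro hΦ
  have hXp : X ^ p - 1 ∣ Qpoly t :=
    X_pow_sub_one_dvd_of_cyclotomic_dvd (by exact_mod_cast hp.ne_zero) hΦ (Qpoly_isRoot_one t)
  have ht : (4 * t + 3 : ZMod p) = 0 := by
    have hdvd := dvd_derivative_eval_one_of_X_pow_sub_one_dvd hXp
    rw [Qpoly_derivative_eval_one] at hdvd
    exact_mod_cast (ZMod.intCast_zmod_eq_zero_iff_dvd _ p).mpr hdvd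
  have hcoeff := coeff_toCyclicGroupAlgebra_Qpoly (by omega) ht
  rw [toCyclicGroupAlgebra_eq_zero_of_X_pow_sub_one_dvd hXp] at hcoeff
  simp at hcoeff
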